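/- Let g be a finite-dimensional real Lie algebra which is not abelian. Then there exists an inner product on g such that the scalar curvature tr(Ric) of the corresponding metric Lie algebra is negative. -/

import Mathlib

/-!
For the inner product making a basis `e` orthonormal, the scalar curvature is
`-¼ Σ_{i,j} |[e_i, e_j]|² - ½ Σ_k B(e_k, e_k) - |H|²`, where `B` is the Killing form.

If some bracket `[x, y]` leaves `span {x, y}`, extend `x, y, [x, y]` to a basis and shrink the
vector `[x, y]` by a factor `1/t`: the term `|[x, y]|²` grows like `t²`, while each
`B(e_k, e_k)` is only multiplied by a factor in `(0, 1]`, so for large `t` the scalar curvature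
is negative.

Otherwise every `ad e_k` maps `e_i` into `span {e_k, e_i}`, so in the sum
`B(e_k, e_k) = Σ_{i,j} (ad e_k)_{ij} (ad e_k)_{ji}` only diagonal products survive and
`B(e_k, e_k) ≥ 0`; then any basis works, as some bracket is nonzero.
-/

open Finset

noncomputable section

variable {V : Type*} [AddCommGroup V] [Module ℝ V] {ι : Type*} [Fintype ι] [DecidableEq ι]

/-- The inner product on `V` making the basis `b` orthonormal. -/
def bip (b : Module.Basis ι ℝ V) (x y : V) : ℝ := ∑ i, b.repr x i * b.repr y i

/-- The element `H` with `⟨H, X⟩ = tr (ad_μ X)` for the inner product of `b`. -/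
def ricH (b : Module.Basis ι ℝ V) (μ : V →ₗ[ℝ] V →ₗ[ℝ] V) : V :=
  ∑ i, (LinearMap.trace ℝ V (μ (b i))) • b i

/-- The Ricci curvature form of the metric Lie algebra `(V, μ, bip b)`. -/
def ricciForm (b : Module.Basis ι ℝ V) (μ : V →ₗ[ℝ] V →ₗ[ℝ] V) (X Y : V) : ℝ :=
  -(1/2) * ∑ i, ∑ j, bip b (μ X (b i)) (b j) * bip b (μ Y (b i)) (b j)
  + (1/4) * ∑ i, ∑ j, bip b (μ (b i) (b j)) X * bip b (μ (b i) (b j)) Y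
  - (1/2) * (LinearMap.trace ℝ V ((μ X) ∘ₗ (μ Y)))
  - (1/2) * (bip b (μ (ricH b μ) X) Y + bip b (μ (ricH b μ) Y) X)

/-- The Ricci operator of `(V, μ, bip b)` is negative definite. -/
def RicciNegDef (b : Module.Basis ι ℝ V) (μ : V →ₗ[ℝ] V →ₗ[ℝ] V) : Prop :=
  ∀ X : V, X ≠ 0 → ricciForm b μ X X < 0

/-- The Lie bracket of a Lie algebra `g`, as a bilinear map. -/
def adL (g : Type*) [LieRing g] [LieAlgebra ℝ g] : g →ₗ[ℝ] g →ₗ[ℝ] g :=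
  LinearMap.mk₂ ℝ (fun x y => ⁅x, y⁆) (fun x x' y => add_lie x x' y)
    (fun a x y => smul_lie a x y) (fun x y y' => lie_add x y y')
    (fun a x y => lie_smul a x y)

end

theorem LinearMap.trace_eq_sum_repr {R M ι : Type*} [CommSemiring R] [AddCommMonoid M] [Module R M]
    [Fintype ι] (b : Module.Basis ι R M) (f : M →ₗ[R] M) :
    trace R M f = ∑ i, b.repr (f (b i)) i := by
  classical
  simp [trace_eq_matrix_trace R b, Matrix.trace, toMatrix_apply]

theorem LinearMap.trace_comp_self_eq_sum {R M ι : Type*} [CommSemiring R] [AddCommMonoid M]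
    [Module R M] [Fintype ι] (b : Module.Basis ι R M) (f : M →ₗ[R] M) :
    trace R M (f ∘ₗ f) = ∑ i, ∑ j, b.repr (f (b i)) j * b.repr (f (b j)) i := by
  classical
  refine (trace_eq_sum_repr b _).trans (sum_congr rfl fun i _ => ?_)
  rw [comp_apply, ← toMatrix_mulVec_repr b b f]
  simp [Matrix.mulVec, dotProduct, toMatrix_apply, mul_comm]

theorem LinearMap.trace_comp_self_nonneg_of_mem_span_pair {K M ι : Type*} [Field K] [LinearOrder K]
    [IsStrictOrderedRing K] [AddCommGroup M] [Module K M] [Fintype ι] (b : Module.Basis ι K M)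
    (k : ι) (f : M →ₗ[K] M) (hf : ∀ i, f (b i) ∈ Submodule.span K {b k, b i}) :
    0 ≤ trace K M (f ∘ₗ f) := by
  classical
  have hzero : ∀ i j, j ≠ k → j ≠ i → b.repr (f (b i)) j = 0 := fun i j hjk hji => by
    obtain ⟨α, β, hαβ⟩ := Submodule.mem_span_pair.mp (hf i)
    simp [← hαβ, hjk.symm, hji.symm]
  rw [trace_comp_self_eq_sum b]
  refine sum_nonneg fun i _ => sum_nonneg fun j _ => ?_
  rcases eq_or_ne i j with rfl | hij
  · exact mul_self_nonneg _
  rcases eq_or_ne j k with rfl | hjk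
  · rw [hzero j i hij hij, mul_zero]
  · rw [hzero i j hjk hij.symm, zero_mul]

theorem LinearIndependent.exists_finBasis_extension {K V ι : Type*} [DivisionRing K]
    [AddCommGroup V] [Module K V] [FiniteDimensional K V] {v : ι → V}
    (hv : LinearIndependent K v) :
    ∃ (b : Module.Basis (Fin (Module.finrank K V)) K V) (f : ι ↪ Fin (Module.finrank K V)),
      ∀ i, b (f i) = v i := by
  let B := Module.Basis.extend hv.linearIndepOn_id
  let e := B.indexEquiv (Module.finBasis K V)
  let f : ι → Fin (Module.finrank K V) := fun i =>
    e ⟨v i, hv.linearIndepOn_id.subset_extend _ (Set.mem_range_self i)⟩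
  refine ⟨B.reindex e, ⟨f, fun i j hij => hv.injective ?_⟩, fun i => ?_⟩
  · simpa using congrArg Subtype.val (e.injective hij)
  · rw [Module.Basis.reindex_apply, Module.Basis.extend_apply_self]
    exact congrArg Subtype.val (e.symm_apply_apply _)

noncomputable section

variable {V : Type*} [AddCommGroup V] [Module ℝ V] {ι : Type*} [Fintype ι]

theorem bip_basis_right (b : Module.Basis ι ℝ V) (v : V) (j : ι) :
    bip b v (b j) = b.repr v j := by
  classical
  simp [bip, Finsupp.single_apply]

theorem sq_repr_le_bip_self (b : Module.Basis ι ℝ V) (v : V) (k : ι) :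
    b.repr v k ^ 2 ≤ bip b v v := by
  rw [sq]
  exact single_le_sum (fun i _ => mul_self_nonneg (b.repr v i)) (mem_univ k)

theorem bip_self_nonneg (b : Module.Basis ι ℝ V) (v : V) : 0 ≤ bip b v v :=
  sum_nonneg fun i _ => mul_self_nonneg (b.repr v i)

def scalarCurvature (b : Module.Basis ι ℝ V) (μ : V →ₗ[ℝ] V →ₗ[ℝ] V) : ℝ :=
  ∑ i, ricciForm b μ (b i) (b i)

theorem scalarCurvature_eq (b : Module.Basis ι ℝ V) (μ : V →ₗ[ℝ] V →ₗ[ℝ] V) :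
    scalarCurvature b μ =
      -(1/4) * ∑ i, ∑ j, bip b (μ (b i) (b j)) (μ (b i) (b j))
      - (1/2) * ∑ k, LinearMap.trace ℝ V (μ (b k) ∘ₗ μ (b k))
      - ∑ i, LinearMap.trace ℝ V (μ (b i)) ^ 2 := by
  have hout : ∑ l, ∑ i, ∑ j, bip b (μ (b l) (b i)) (b j) * bip b (μ (b l) (b i)) (b j)
      = ∑ i, ∑ j, bip b (μ (b i) (b j)) (μ (b i) (b j)) := by
    simp only [bip_basis_right]
    rfl
  have hin : ∑ l, ∑ i, ∑ j, bip b (μ (b i) (b j)) (b l) * bip b (μ (b i) (b j)) (b l)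
      = ∑ i, ∑ j, bip b (μ (b i) (b j)) (μ (b i) (b j)) := by
    simp only [bip_basis_right]
    rw [sum_comm]
    exact sum_congr rfl fun i _ => sum_comm
  have hH : ∑ l, bip b (μ (ricH b μ) (b l)) (b l)
      = ∑ i, LinearMap.trace ℝ V (μ (b i)) ^ 2 := by
    simp only [bip_basis_right]
    rw [← LinearMap.trace_eq_sum_repr b]
    simp [ricH, sq]
  simp only [scalarCurvature, ricciForm, sum_add_distrib, sum_sub_distrib, ← mul_sum,
    hout, hin, hH]
  ring

theorem scalarCurvature_neg_of_lt (b : Module.Basis ι ℝ V) (μ : V →ₗ[ℝ] V →ₗ[ℝ] V) (i j : ι)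
    (h : -(2 * ∑ k, LinearMap.trace ℝ V (μ (b k) ∘ₗ μ (b k)))
      < bip b (μ (b i) (b j)) (μ (b i) (b j))) :
    scalarCurvature b μ < 0 := by
  have hbracket : bip b (μ (b i) (b j)) (μ (b i) (b j))
      ≤ ∑ i, ∑ j, bip b (μ (b i) (b j)) (μ (b i) (b j)) :=
    (single_le_sum (f := fun j => bip b (μ (b i) (b j)) (μ (b i) (b j)))
        (fun j _ => bip_self_nonneg b _) (mem_univ j)).trans
      (single_le_sum (f := fun i => ∑ j, bip b (μ (b i) (b j)) (μ (b i) (b j)))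
        (fun i _ => sum_nonneg fun j _ => bip_self_nonneg b _) (mem_univ i))
  have hH : 0 ≤ ∑ i, LinearMap.trace ℝ V (μ (b i)) ^ 2 := sum_nonneg fun i _ => sq_nonneg _
  rw [scalarCurvature_eq]
  linarith

theorem neg_sum_abs_le_sum_trace_comp_self_unitsSMul (b : Module.Basis ι ℝ V)
    (μ : V →ₗ[ℝ] V →ₗ[ℝ] V) (c : ι → ℝˣ) (hc : ∀ k, |(c k : ℝ)| ≤ 1) :
    -∑ k, |LinearMap.trace ℝ V (μ (b k) ∘ₗ μ (b k))|
      ≤ ∑ k, LinearMap.trace ℝ V (μ (b.unitsSMul c k) ∘ₗ μ (b.unitsSMul c k)) := by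
  rw [← sum_neg_distrib]
  refine sum_le_sum fun k _ => ?_
  have hscale : μ (b.unitsSMul c k) ∘ₗ μ (b.unitsSMul c k)
      = ((c k : ℝ) ^ 2) • (μ (b k) ∘ₗ μ (b k)) := by
    rw [Module.Basis.unitsSMul_apply, Units.smul_def, map_smul, LinearMap.smul_comp,
      LinearMap.comp_smul, smul_smul, sq]
  have hc2 : |(c k : ℝ) ^ 2| ≤ 1 := by
    rw [abs_pow]; exact pow_le_one₀ (abs_nonneg _) (hc k)
  rw [hscale, map_smul, smul_eq_mul]
  calc -|LinearMap.trace ℝ V (μ (b k) ∘ₗ μ (b k))|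
      ≤ -(|(c k : ℝ) ^ 2| * |LinearMap.trace ℝ V (μ (b k) ∘ₗ μ (b k))|) :=
        neg_le_neg (mul_le_of_le_one_left (abs_nonneg _) hc2)
    _ ≤ _ := by rw [← abs_mul]; exact neg_abs_le _

theorem exists_scalarCurvature_neg_of_repr_ne_zero [DecidableEq ι] (b : Module.Basis ι ℝ V)
    (μ : V →ₗ[ℝ] V →ₗ[ℝ] V) {i j k : ι} (hi : i ≠ k) (hj : j ≠ k)
    (h : b.repr (μ (b i) (b j)) k ≠ 0) :
    ∃ b' : Module.Basis ι ℝ V, scalarCurvature b' μ < 0 := by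
  set γ := b.repr (μ (b i) (b j)) k
  set M := ∑ l, |LinearMap.trace ℝ V (μ (b l) ∘ₗ μ (b l))|
  have hγ : 0 < γ ^ 2 := by positivity
  have hM : 0 ≤ M := sum_nonneg fun l _ => abs_nonneg _
  set t : ℝ := 1 + 2 * M / γ ^ 2
  have ht : 1 ≤ t := le_add_of_nonneg_right (by positivity)
  let c : ι → ℝˣ := Function.update 1 k (Units.mk0 t⁻¹ (inv_ne_zero (by positivity)))
  have hc1 : ∀ l, l ≠ k → c l = 1 := fun l hl => Function.update_of_ne hl _ _
  have hc : ∀ l, |(c l : ℝ)| ≤ 1 := by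
    intro l
    rcases eq_or_ne l k with rfl | hl
    · simpa [c, abs_inv, abs_of_pos (zero_lt_one.trans_le ht)] using inv_le_one_of_one_le₀ ht
    · simp [hc1 l hl]
  set b' := b.unitsSMul c
  have hb' : ∀ l, l ≠ k → b' l = b l := fun l hl => by
    rw [Module.Basis.unitsSMul_apply, hc1 l hl, one_smul]
  have hrepr : b'.repr (μ (b' i) (b' j)) k = t * γ := by
    rw [hb' i hi, hb' j hj]
    simp [b', c, γ, Units.smul_def]
  refine ⟨b', scalarCurvature_neg_of_lt b' μ i j ?_⟩
  calc -(2 * ∑ l, LinearMap.trace ℝ V (μ (b' l) ∘ₗ μ (b' l)))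
      ≤ 2 * M := by linarith [neg_sum_abs_le_sum_trace_comp_self_unitsSMul b μ c hc]
    _ < t * γ ^ 2 := by
        rw [add_mul, div_mul_cancel₀ _ hγ.ne']
        linarith
    _ ≤ (t * γ) ^ 2 := by nlinarith
    _ ≤ _ := hrepr ▸ sq_repr_le_bip_self b' _ k

section LieAlgebra

theorem linearIndependent_lie_of_lie_notMem_span {K L : Type*} [Field K] [LieRing L]
    [LieAlgebra K L] {x y : L} (h : ⁅x, y⁆ ∉ Submodule.span K {x, y}) :
    LinearIndependent K ![⁅x, y⁆, x, y] := by
  refine linearIndependent_finCons.mpr ⟨?_, by rwa [Matrix.range_cons_cons_empty]⟩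
  have hx : x ≠ 0 := by
    rintro rfl
    exact h (by simp)
  refine (LinearIndependent.pair_iff' hx).mpr fun a hax => h ?_
  simp [← hax]

variable {g : Type*} [LieRing g] [LieAlgebra ℝ g]

theorem adL_apply (x y : g) : adL g x y = ⁅x, y⁆ := rfl

theorem scalarCurvature_adL_neg_of_forall_lie_mem_span {ι : Type*} [Fintype ι]
    (b : Module.Basis ι ℝ g) (hspan : ∀ x y : g, ⁅x, y⁆ ∈ Submodule.span ℝ {x, y})
    (hnab : ∃ x y : g, ⁅x, y⁆ ≠ 0) :
    scalarCurvature b (adL g) < 0 := by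
  obtain ⟨i, j, hij⟩ : ∃ i j, adL g (b i) (b j) ≠ 0 := by
    by_contra! h
    obtain ⟨x, y, hxy⟩ := hnab
    exact hxy (LinearMap.congr_fun₂ (LinearMap.ext_basis b b (B' := 0) h) x y)
  obtain ⟨k, hk⟩ : ∃ k, b.repr (adL g (b i) (b j)) k ≠ 0 := by
    by_contra! h
    exact hij (b.repr.map_eq_zero_iff.mp (Finsupp.ext h))
  have hkilling : 0 ≤ ∑ l, LinearMap.trace ℝ g (adL g (b l) ∘ₗ adL g (b l)) :=
    sum_nonneg fun l _ => LinearMap.trace_comp_self_nonneg_of_mem_span_pair b l _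
      fun i => hspan (b l) (b i)
  refine scalarCurvature_neg_of_lt b (adL g) i j ?_
  calc -(2 * ∑ l, LinearMap.trace ℝ g (adL g (b l) ∘ₗ adL g (b l))) ≤ 0 := by linarith
    _ < b.repr (adL g (b i) (b j)) k ^ 2 := by positivity
    _ ≤ _ := sq_repr_le_bip_self b _ k

theorem exists_scalarCurvature_adL_neg_of_lie_notMem_span [FiniteDimensional ℝ g] {x y : g}
    (h : ⁅x, y⁆ ∉ Submodule.span ℝ {x, y}) :
    ∃ b : Module.Basis (Fin (Module.finrank ℝ g)) ℝ g, scalarCurvature b (adL g) < 0 := by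
  obtain ⟨b, f, hbf⟩ := (linearIndependent_lie_of_lie_notMem_span h).exists_finBasis_extension
  have hk : b.repr (adL g (b (f 1)) (b (f 2))) (f 0) ≠ 0 := by
    have hx : b (f 1) = x := hbf 1
    have hy : b (f 2) = y := hbf 2
    have hxy : b (f 0) = ⁅x, y⁆ := hbf 0
    rw [adL_apply, hx, hy, ← hxy, b.repr_self]
    simp
  exact exists_scalarCurvature_neg_of_repr_ne_zero b (adL g)
    (f.injective.ne (by decide)) (f.injective.ne (by decide)) hk

end LieAlgebra

/-- **(Milnor)** Every non-abelian Lie algebra admits an inner product of negative scalar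
curvature (the scalar curvature being the trace of the Ricci operator). -/
theorem exists_negative_scalar_curvature_of_nonabelian
    (g : Type*) [LieRing g] [LieAlgebra ℝ g] [FiniteDimensional ℝ g]
    (hnab : ∃ X Y : g, ⁅X, Y⁆ ≠ 0) :
    ∃ b : Module.Basis (Fin (Module.finrank ℝ g)) ℝ g,
      ∑ i, ricciForm b (adL g) (b i) (b i) < 0 := by
  by_cases h : ∃ x y : g, ⁅x, y⁆ ∉ Submodule.span ℝ {x, y}
  · obtain ⟨x, y, hxy⟩ := h
    exact exists_scalarCurvature_adL_neg_of_lie_notMem_span hxy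
  · push Not at h
    exact ⟨Module.finBasis ℝ g, scalarCurvature_adL_neg_of_forall_lie_mem_span _ h hnab⟩

end
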